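/- arXiv:2112.07002 — 2 statements merged into one kernel-verified Lean document; each statement's English description precedes it below -/
import Mathlib

section
/- (Clark's formula.) Let Z₁ and Z₂ be integrable real random variables on a probability space with means μ₁ = E[Z₁] and μ₂ = E[Z₂], and suppose the law of Z₂ − Z₁ is the Gaussian measure on ℝ with mean μ₂ − μ₁ and variance θ² for some θ > 0. Then max(Z₁, Z₂) is integrable and E[max(Z₁, Z₂)] = μ₁·Φ(δ/θ) + μ₂·Φ(−δ/θ) + θ·φ(δ/θ), where δ = μ₁ − μ₂. -/
open MeasureTheory ProbabilityTheory Real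
open scoped NNReal ENNReal

/-- Standard normal p.d.f. -/
noncomputable def phi (w : ℝ) : ℝ := (1 / Real.sqrt (2 * Real.pi)) * Real.exp (-w ^ 2 / 2)

/-- Standard normal c.d.f. -/
noncomputable def Phi (w : ℝ) : ℝ := ∫ u in Set.Iic w, phi u

lemma phi_nonneg (x : ℝ) : 0 ≤ phi x := by
  unfold phi; positivity

lemma phi_even (x : ℝ) : phi (-x) = phi x := by
  simp [phi, neg_pow]

lemma phi_integrable : Integrable phi := by
  have h := (integrable_exp_neg_mul_sq (by norm_num : (0:ℝ) < 1/2)).const_mul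
    (1 / Real.sqrt (2 * Real.pi))
  convert h using 2 with x
  unfold phi
  ring_nf

lemma integral_phi : ∫ x, phi x = 1 := by
  have h : ∫ x : ℝ, Real.exp (-(1/2) * x ^ 2) = Real.sqrt (Real.pi / (1/2)) :=
    integral_gaussian (1/2)
  have h2 : ∫ x : ℝ, phi x = (1 / Real.sqrt (2 * Real.pi)) * Real.sqrt (Real.pi / (1/2)) := by
    rw [← h, ← integral_const_mul]
    congr 1 with x
    unfold phi; ring_nf
  rw [h2, show Real.pi / (1/2) = 2 * Real.pi by ring]
  rw [one_div, inv_mul_cancel₀]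
  positivity

lemma integrable_id_mul_phi : Integrable (fun x : ℝ => x * phi x) := by
  have h := (integrable_mul_exp_neg_mul_sq (by norm_num : (0:ℝ) < 1/2)).const_mul
    (1 / Real.sqrt (2 * Real.pi))
  convert h using 2 with x
  unfold phi
  ring_nf

lemma hasDerivAt_neg_phi (x : ℝ) : HasDerivAt (fun y => -phi y) (x * phi x) x := by
  have h : HasDerivAt (fun y : ℝ => -(y ^ 2 / 2)) (-x) x := by
    simpa using ((hasDerivAt_pow 2 x).div_const 2).fun_neg
  have h2 : HasDerivAt (fun y : ℝ => -(1 / Real.sqrt (2 * Real.pi) * Real.exp (-(y ^ 2 / 2))))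
      (-(1 / Real.sqrt (2 * Real.pi) * (Real.exp (-(x ^ 2 / 2)) * -x))) x :=
    (h.exp.const_mul (1 / Real.sqrt (2 * Real.pi))).fun_neg
  convert h2 using 1
  · funext y; unfold phi; ring_nf
  · unfold phi; ring_nf

lemma phi_tendsto_zero : Filter.Tendsto (fun y : ℝ => -phi y) Filter.atTop (nhds 0) := by
  rw [show (0:ℝ) = -((1 / Real.sqrt (2 * Real.pi)) * 0) by ring]
  apply Filter.Tendsto.neg
  apply Filter.Tendsto.const_mul
  apply Real.tendsto_exp_atBot.comp
  have h : Filter.Tendsto (fun x : ℝ => x ^ 2 / 2) Filter.atTop Filter.atTop :=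
    (Filter.tendsto_pow_atTop two_ne_zero).atTop_div_const (by norm_num)
  have h3 : Filter.Tendsto (fun x : ℝ => -(x ^ 2 / 2)) Filter.atTop Filter.atBot :=
    (Filter.tendsto_neg_atTop_atBot (G := ℝ)).comp h
  simpa [neg_div] using h3

lemma integral_id_mul_phi_Ioi (a : ℝ) : ∫ x in Set.Ioi a, x * phi x = phi a := by
  have := integral_Ioi_of_hasDerivAt_of_tendsto' (f := fun y => -phi y)
    (f' := fun x => x * phi x) (a := a)
    (fun x _ => hasDerivAt_neg_phi x) integrable_id_mul_phi.integrableOn phi_tendsto_zero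
  simpa using this

lemma integral_phi_Ici (a : ℝ) : ∫ x in Set.Ici a, phi x = Phi (-a) := by
  have h := integral_comp_neg_Iic (-a) phi
  simp only [phi_even, neg_neg] at h
  rw [MeasureTheory.integral_Ici_eq_integral_Ioi, ← h]
  rfl

lemma Phi_neg (a : ℝ) : Phi (-a) = 1 - Phi a := by
  have h := intervalIntegral.integral_Iic_add_Ioi (b := a) (μ := MeasureTheory.volume)
    phi_integrable.integrableOn phi_integrable.integrableOn
  have h2 : ∫ x in Set.Ioi a, phi x = Phi (-a) := by
    rw [← MeasureTheory.integral_Ici_eq_integral_Ioi, integral_phi_Ici]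
  rw [integral_phi, h2] at h
  have : Phi a = ∫ x in Set.Iic a, phi x := rfl
  linarith [h, this]

lemma pdf_shift (m θ : ℝ) (hθ : 0 < θ) (u : ℝ) :
    gaussianPDFReal m (θ^2).toNNReal (θ * u + m) = phi u / θ := by
  unfold gaussianPDFReal phi
  have hv : (((θ^2).toNNReal : ℝ≥0) : ℝ) = θ^2 := Real.coe_toNNReal _ (sq_nonneg θ)
  rw [hv, show (2 * Real.pi * θ^2) = (2*Real.pi) * θ^2 by ring,
    Real.sqrt_mul (by positivity) (θ^2), Real.sqrt_sq hθ.le,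
    show θ*u + m - m = θ*u by ring,
    show -(θ*u)^2 / (2*θ^2) = -u^2/2 by field_simp]
  have h2π : (0:ℝ) < Real.sqrt (2 * Real.pi) := Real.sqrt_pos.2 (by positivity)
  field_simp

lemma integral_max_gaussian (m : ℝ) (θ : ℝ) (hθ : 0 < θ) :
    ∫ x, max x 0 ∂(gaussianReal m (θ^2).toNNReal)
      = m * Phi (m/θ) + θ * phi (m/θ) := by
  set v : ℝ≥0 := (θ^2).toNNReal with hvdef
  have hv : v ≠ 0 := by
    simp only [hvdef, ne_eq, Real.toNNReal_eq_zero, not_le]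
    positivity
  rw [gaussianReal_of_var_ne_zero m hv]
  rw [show gaussianPDF m v = fun x => ((Real.toNNReal (gaussianPDFReal m v x) : ℝ≥0) : ℝ≥0∞)
    from rfl]
  rw [integral_withDensity_eq_integral_smul
    (f := fun x => (gaussianPDFReal m v x).toNNReal)
    ((measurable_gaussianPDFReal m v).real_toNNReal) _]
  have hptw : ∀ x, (Real.toNNReal (gaussianPDFReal m v x)) • max x 0
      = gaussianPDFReal m v x * max x 0 := by
    intro x
    rw [NNReal.smul_def, Real.coe_toNNReal _ (gaussianPDFReal_nonneg m v x), smul_eq_mul]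
  simp_rw [hptw]
  set g : ℝ → ℝ := fun x => gaussianPDFReal m v x * max x 0 with hg
  have h1 : ∫ x, g x = ∫ x, g (x + m) := (integral_add_right_eq_self g m).symm
  have h2 : ∫ x, g (θ * x + m) = |θ⁻¹| • ∫ x, g (x + m) :=
    Measure.integral_comp_mul_left (fun x => g (x + m)) θ
  have h3 : ∫ x, g x = θ * ∫ x, g (θ * x + m) := by
    rw [h2, abs_of_pos (inv_pos.2 hθ), smul_eq_mul, ← mul_assoc,
      mul_inv_cancel₀ hθ.ne', one_mul, h1]
  rw [h3]
  have h4 : ∀ u : ℝ, g (θ * u + m)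
      = (phi u / θ) * max (θ * u + m) 0 := by
    intro u; rw [hg]; simp only []; rw [pdf_shift m θ hθ u]
  simp_rw [h4]
  rw [← MeasureTheory.integral_const_mul]
  have h5 : (fun u : ℝ => θ * (phi u / θ * max (θ * u + m) 0))
      = Set.indicator (Set.Ioi (-m/θ)) (fun u => m * phi u + θ * (u * phi u)) := by
    funext u
    rcases lt_or_ge (-m/θ) u with h | h
    · rw [Set.indicator_of_mem (Set.mem_Ioi.2 h)]
      have hpos : 0 ≤ θ * u + m := by
        have h' := (div_lt_iff₀ hθ).1 h
        nlinarith
      rw [max_eq_left hpos]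
      field_simp
      ring
    · rw [Set.indicator_of_notMem (by simp [Set.mem_Ioi, not_lt, h])]
      have hneg : θ * u + m ≤ 0 := by
        have h' := (le_div_iff₀ hθ).1 h
        nlinarith
      rw [max_eq_right hneg, mul_zero, mul_zero]
  rw [h5, MeasureTheory.integral_indicator measurableSet_Ioi]
  rw [MeasureTheory.integral_add ((phi_integrable.const_mul m).integrableOn)
    ((integrable_id_mul_phi.const_mul θ).integrableOn),
    MeasureTheory.integral_const_mul, MeasureTheory.integral_const_mul,
    ← MeasureTheory.integral_Ici_eq_integral_Ioi, integral_phi_Ici,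
    integral_id_mul_phi_Ioi]
  rw [show -(-m/θ) = m/θ by ring, show (-m/θ : ℝ) = -(m/θ) by ring, phi_even]

theorem clark_formula
    {Ω : Type*} [MeasurableSpace Ω] (P : Measure Ω) [IsProbabilityMeasure P]
    (Z₁ Z₂ : Ω → ℝ) (hZ₁ : Integrable Z₁ P) (hZ₂ : Integrable Z₂ P)
    (μ₁ μ₂ : ℝ) (hμ₁ : μ₁ = ∫ ω, Z₁ ω ∂P) (hμ₂ : μ₂ = ∫ ω, Z₂ ω ∂P)
    (θ : ℝ) (hθ : 0 < θ)
    (hlaw : Measure.map (fun ω => Z₂ ω - Z₁ ω) P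
            = gaussianReal (μ₂ - μ₁) (Real.toNNReal (θ ^ 2))) :
    Integrable (fun ω => max (Z₁ ω) (Z₂ ω)) P ∧
    ∫ ω, max (Z₁ ω) (Z₂ ω) ∂P =
      μ₁ * Phi ((μ₁ - μ₂) / θ) + μ₂ * Phi (-(μ₁ - μ₂) / θ)
        + θ * phi ((μ₁ - μ₂) / θ) := by
  have hX : Integrable (fun ω => Z₂ ω - Z₁ ω) P := hZ₂.sub hZ₁
  have key : ∀ a b : ℝ, max a b = a + max (b - a) 0 := by
    intro a b
    rcases le_total a b with h | h
    · rw [max_eq_right h, max_eq_left (by linarith)]; ring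
    · rw [max_eq_left h, max_eq_right (by linarith)]; ring
  have hpos : Integrable (fun ω => max (Z₂ ω - Z₁ ω) 0) P := hX.pos_part
  have hint : Integrable (fun ω => max (Z₁ ω) (Z₂ ω)) P :=
    (hZ₁.add hpos).congr (Filter.Eventually.of_forall fun ω => (key _ _).symm)
  refine ⟨hint, ?_⟩
  have h1 : ∫ ω, max (Z₁ ω) (Z₂ ω) ∂P
      = μ₁ + ∫ ω, max (Z₂ ω - Z₁ ω) 0 ∂P := by
    calc ∫ ω, max (Z₁ ω) (Z₂ ω) ∂P
        = ∫ ω, (Z₁ ω + max (Z₂ ω - Z₁ ω) 0) ∂P := by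
          apply MeasureTheory.integral_congr_ae
          exact Filter.Eventually.of_forall fun ω => key _ _
      _ = μ₁ + ∫ ω, max (Z₂ ω - Z₁ ω) 0 ∂P := by
          rw [MeasureTheory.integral_add hZ₁ hpos, hμ₁]
  have h2 : ∫ ω, max (Z₂ ω - Z₁ ω) 0 ∂P
      = ∫ x, max x 0 ∂(Measure.map (fun ω => Z₂ ω - Z₁ ω) P) := by
    have hcont : Continuous (fun x : ℝ => max x 0) := continuous_id.max continuous_const
    exact (MeasureTheory.integral_map (φ := fun ω => Z₂ ω - Z₁ ω) (f := fun x : ℝ => max x 0)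
      hX.aemeasurable hcont.aestronglyMeasurable).symm
  have h3 : ∫ x, max x 0 ∂(Measure.map (fun ω => Z₂ ω - Z₁ ω) P)
      = (μ₂ - μ₁) * Phi ((μ₂ - μ₁)/θ) + θ * phi ((μ₂ - μ₁)/θ) := by
    rw [hlaw]
    exact integral_max_gaussian (μ₂ - μ₁) θ hθ
  rw [h1, h2, h3]
  have e1 : (μ₂ - μ₁)/θ = -((μ₁ - μ₂)/θ) := by ring
  have e2 : -(μ₁ - μ₂)/θ = -((μ₁ - μ₂)/θ) := by ring
  rw [e1, e2, Phi_neg, phi_even]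
  ring
end

section
/- (Claim 1 in the proof of Theorem 1.) Let n ≥ 1 and let c : Fin n → Fin n → ℝ be symmetric (c j j' = c j' j) with zero diagonal (c j j = 0), and suppose Σ_{j} Σ_{j' ≠ j} |c j j'| < 1/2. For x : Fin 2 → Fin n → {0,1}, define θ²(x) = Σ_j (x₁ⱼ + x₂ⱼ − 2·x₁ⱼ·x₂ⱼ) + 2·[ Σ_{j < j'} c j j' · (x₁ⱼ·x₁ⱼ' + x₂ⱼ·x₂ⱼ') − Σ_j Σ_{j' ≠ j} c j j' · x₁ⱼ·x₂ⱼ' ]. Then every maximizer x* of θ² over all x ∈ {0,1}^{2×n} satisfies x*₁ⱼ + x*₂ⱼ = 1 for every j. -/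
open MeasureTheory ProbabilityTheory Real

/-- The variance expression `θ(x)²` arising when `n` standard normal variables with
pairwise covariances `c j j'` are split in two groups according to `x`. -/
noncomputable def theta2 {n : ℕ} (c : Fin n → Fin n → ℝ) (x : Fin 2 → Fin n → ℝ) : ℝ :=
  (∑ j, (x 0 j + x 1 j - 2 * x 0 j * x 1 j)) +
    2 * ((∑ j, ∑ j', if j < j' then c j j' * (x 0 j * x 0 j' + x 1 j * x 1 j') else 0)
      - ∑ j, ∑ j', if j' ≠ j then c j j' * (x 0 j * x 1 j') else 0)

/-!
Fix a column `k`. In each of the three sums of `θ²` the entry `x₀ₖ` never multiplies itself,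
so `θ²` is affine in `x₀ₖ`, with slope `1 - 2 x₁ₖ + 2 γ` where `γ = theta2Coupling c x k`
collects the off-diagonal couplings of `k`. If `x₀ₖ = x₁ₖ`, flipping `x₀ₖ` moves it by
`δ = ±1` with `δ (1 - 2 x₁ₖ) = 1`, so `θ²` changes by `1 + 2 δ γ`. Since `|γ|` is at most the
`k`-th row plus the `k`-th column of `|c|` off the diagonal, which is below `1/2`, the flip
strictly increases `θ²`.
-/

open Finset Function

lemma update_apply_eq_add {ι G : Type*} [DecidableEq ι] [AddCommGroup G] (u : ι → G) (k : ι)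
    (t : G) (j : ι) : update u k t j = u j + if j = k then t - u k else 0 := by
  rcases eq_or_ne j k with rfl | h <;> simp [*]

section UpdateSums

variable {n : ℕ} (c : Fin n → Fin n → ℝ) (u w : Fin n → ℝ) (k : Fin n) (t : ℝ)

lemma sum_add_sub_two_mul_update :
    ∑ j, (update u k t j + w j - 2 * update u k t j * w j)
      = (∑ j, (u j + w j - 2 * u j * w j)) + (t - u k) * (1 - 2 * w k) := by
  have hterm : ∀ j, update u k t j + w j - 2 * update u k t j * w j
      = (u j + w j - 2 * u j * w j) + if j = k then (t - u k) * (1 - 2 * w j) else 0 := by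
    intro j
    simp only [update_apply_eq_add]
    split_ifs <;> ring
  simp [hterm, sum_add_distrib]

lemma sum_sum_lt_mul_update :
    ∑ j, ∑ j', (if j < j' then c j j' * (update u k t j * update u k t j' + w j * w j') else 0)
      = (∑ j, ∑ j', if j < j' then c j j' * (u j * u j' + w j * w j') else 0) +
        (t - u k) *
          ∑ j, ((if k < j then c k j * u j else 0) + if j < k then c j k * u j else 0) := by
  have hterm : ∀ j j',
      (if j < j' then c j j' * (update u k t j * update u k t j' + w j * w j') else 0)
        = (if j < j' then c j j' * (u j * u j' + w j * w j') else 0) +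
          ((if j = k then (t - u k) * (if k < j' then c k j' * u j' else 0) else 0) +
            if j' = k then (t - u k) * (if j < k then c j k * u j else 0) else 0) := by
    intro j j'
    simp only [update_apply_eq_add]
    split_ifs <;> subst_vars <;> first | (exfalso; order) | ring
  simp only [hterm, sum_add_distrib]
  rw [sum_comm (f := fun j j' => if j' = k then _ else _)]
  simp [mul_add, mul_sum]

lemma sum_sum_ne_mul_update :
    ∑ j, ∑ j', (if j' ≠ j then c j j' * (update u k t j * w j') else 0)
      = (∑ j, ∑ j', if j' ≠ j then c j j' * (u j * w j') else 0) +
        (t - u k) * ∑ j, (if j ≠ k then c k j * w j else 0) := by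
  have hterm : ∀ j j', (if j' ≠ j then c j j' * (update u k t j * w j') else 0)
      = (if j' ≠ j then c j j' * (u j * w j') else 0) +
        if j = k then (t - u k) * (if j' ≠ k then c k j' * w j' else 0) else 0 := by
    intro j j'
    simp only [update_apply_eq_add]
    split_ifs <;> subst_vars <;> first | contradiction | ring
  simp only [hterm]
  simp [sum_add_distrib, mul_sum]

end UpdateSums

noncomputable def theta2Coupling {n : ℕ} (c : Fin n → Fin n → ℝ) (x : Fin 2 → Fin n → ℝ)
    (k : Fin n) : ℝ :=
  ∑ j, ((if k < j then c k j * x 0 j else 0) + (if j < k then c j k * x 0 j else 0)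
    - if j ≠ k then c k j * x 1 j else 0)

theorem theta2_update_zero {n : ℕ} (c : Fin n → Fin n → ℝ) (x : Fin 2 → Fin n → ℝ) (k : Fin n)
    (t : ℝ) :
    theta2 c (update x 0 (update (x 0) k t))
      = theta2 c x + (t - x 0 k) * (1 - 2 * x 1 k + 2 * theta2Coupling c x k) := by
  simp only [theta2, update_self, update_of_ne one_ne_zero]
  rw [sum_add_sub_two_mul_update, sum_sum_lt_mul_update, sum_sum_ne_mul_update, theta2Coupling,
    sum_sub_distrib (g := fun j => if j ≠ k then c k j * x 1 j else 0)]
  ring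

lemma abs_theta2Coupling_le {n : ℕ} (c : Fin n → Fin n → ℝ) (x : Fin 2 → Fin n → ℝ) (k : Fin n)
    (hx : ∀ i j, x i j ∈ Set.Icc (0 : ℝ) 1) :
    |theta2Coupling c x k| ≤ ∑ j, if j ≠ k then |c k j| + |c j k| else 0 := by
  refine (abs_sum_le_sum_abs _ _).trans (sum_le_sum fun j _ => ?_)
  obtain ⟨h0, h0'⟩ := hx 0 j
  obtain ⟨h1, h1'⟩ := hx 1 j
  rcases lt_trichotomy k j with hkj | rfl | hjk
  · simp only [if_pos hkj, if_neg hkj.not_gt, if_pos hkj.ne', add_zero, ← mul_sub, abs_mul]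
    have hdiff : |x 0 j - x 1 j| ≤ 1 := abs_sub_le_iff.2 ⟨by linarith, by linarith⟩
    calc |c k j| * |x 0 j - x 1 j| ≤ |c k j| := mul_le_of_le_one_right (abs_nonneg _) hdiff
      _ ≤ |c k j| + |c j k| := le_add_of_nonneg_right (abs_nonneg _)
  · simp
  · simp only [if_neg hjk.not_gt, if_pos hjk, if_pos hjk.ne, zero_add]
    calc |c j k * x 0 j - c k j * x 1 j| ≤ |c j k * x 0 j| + |c k j * x 1 j| := abs_sub _ _
      _ ≤ |c j k| + |c k j| := by
          rw [abs_mul, abs_mul, abs_of_nonneg h0, abs_of_nonneg h1]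
          exact add_le_add (mul_le_of_le_one_right (abs_nonneg _) h0')
            (mul_le_of_le_one_right (abs_nonneg _) h1')
      _ = |c k j| + |c j k| := add_comm _ _

lemma sum_ne_add_le_sum_sum_ne {ι : Type*} [Fintype ι] [DecidableEq ι] (a : ι → ι → ℝ)
    (ha : ∀ i j, 0 ≤ a i j) (k : ι) :
    ∑ j, (if j ≠ k then a k j + a j k else 0) ≤ ∑ j, ∑ j', if j' ≠ j then a j j' else 0 := by
  have hcol : ∑ j, (if j ≠ k then a j k else 0)
      ≤ ∑ j ∈ univ.erase k, ∑ j', if j' ≠ j then a j j' else 0 := by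
    rw [← sum_filter, filter_ne' univ k]
    refine sum_le_sum fun j hj => ?_
    calc a j k = if k ≠ j then a j k else 0 := (if_pos (ne_of_mem_erase hj).symm).symm
      _ ≤ _ := single_le_sum (f := fun j' => if j' ≠ j then a j j' else 0)
          (fun j' _ => by split_ifs <;> simp [ha]) (mem_univ k)
  calc ∑ j, (if j ≠ k then a k j + a j k else 0)
      = (∑ j, if j ≠ k then a k j else 0) + ∑ j, (if j ≠ k then a j k else 0) := by
        rw [← sum_add_distrib]
        exact sum_congr rfl fun j _ => by split_ifs <;> simp
    _ ≤ (∑ j, if j ≠ k then a k j else 0)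
          + ∑ j ∈ univ.erase k, ∑ j', if j' ≠ j then a j j' else 0 := add_le_add_right hcol _
    _ = _ := add_sum_erase _ (fun j => ∑ j', if j' ≠ j then a j j' else 0) (mem_univ k)

theorem maximizer_is_partition_general
    (n : ℕ) (c : Fin n → Fin n → ℝ)
    (hsmall : (∑ j, ∑ j', if j' ≠ j then |c j j'| else 0) < 1 / 2)
    (x : Fin 2 → Fin n → ℝ) (hx : ∀ i j, x i j = 0 ∨ x i j = 1)
    (hmax : ∀ y : Fin 2 → Fin n → ℝ, (∀ i j, y i j = 0 ∨ y i j = 1) →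
        theta2 c y ≤ theta2 c x) :
    ∀ j, x 0 j + x 1 j = 1 := by
  intro k
  by_contra hk
  set δ := 1 - 2 * x 0 k
  have hsame : x 1 k = x 0 k := by
    rcases hx 0 k with h0 | h0 <;> rcases hx 1 k with h1 | h1 <;> simp_all
  have hδ : δ * (1 - 2 * x 1 k) = 1 ∧ |δ| = 1 := by
    rw [hsame]
    rcases hx 0 k with h0 | h0 <;> norm_num [δ, h0]
  have hflip : ∀ i j, update x 0 (update (x 0) k (1 - x 0 k)) i j = 0 ∨
      update x 0 (update (x 0) k (1 - x 0 k)) i j = 1 := by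
    intro i j
    rcases eq_or_ne i 0 with rfl | hi
    · rcases eq_or_ne j k with rfl | hj
      · rcases hx 0 j with h | h <;> simp [h]
      · simpa [hj] using hx 0 j
    · simpa [hi] using hx i j
  have hcoupling : |δ * theta2Coupling c x k| < 1 / 2 := by
    have hIcc : ∀ i j, x i j ∈ Set.Icc (0 : ℝ) 1 := fun i j => by
      rcases hx i j with h | h <;> simp [h]
    calc |δ * theta2Coupling c x k| = |theta2Coupling c x k| := by rw [abs_mul, hδ.2, one_mul]
      _ ≤ _ := abs_theta2Coupling_le c x k hIcc
      _ ≤ _ := sum_ne_add_le_sum_sum_ne (fun i j => |c i j|) (fun _ _ => abs_nonneg _) k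
      _ < 1 / 2 := hsmall
  have hgain := hmax _ hflip
  rw [theta2_update_zero,
    show 1 - x 0 k - x 0 k = δ by ring, mul_add, hδ.1, mul_left_comm] at hgain
  linarith [neg_abs_le (δ * theta2Coupling c x k)]

theorem maximizer_is_partition
    (n : ℕ) (hn : 1 ≤ n) (c : Fin n → Fin n → ℝ)
    (hsymm : ∀ j j', c j j' = c j' j) (hdiag : ∀ j, c j j = 0)
    (hsmall : (∑ j, ∑ j', if j' ≠ j then |c j j'| else 0) < 1 / 2)
    (x : Fin 2 → Fin n → ℝ) (hx : ∀ i j, x i j = 0 ∨ x i j = 1)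
    (hmax : ∀ y : Fin 2 → Fin n → ℝ, (∀ i j, y i j = 0 ∨ y i j = 1) →
        theta2 c y ≤ theta2 c x) :
    ∀ j, x 0 j + x 1 j = 1 :=
  maximizer_is_partition_general n c hsmall x hx hmax
end
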